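/- Let B be a conjunction of literals with domain all of C (|B| = |C|), and suppose that all, or all but one, of the literals of B have a positive monotonic effect on D relative to C. Then B is singular for D(C,Ω) if and only if B is irreducible for D(C,Ω). -/

import Mathlib

/-- An assignment of values to the binary causes indexed by `ι`. -/
abbrev Assign (ι : Type*) := ι → Bool

/-- A conjunction of literals over `ι`: a partial assignment, where `B i = some v`
means the literal at coordinate `i` has target value `v`, and `B i = none` means
`i` is not in the domain of the conjunction. -/
abbrev Conj (ι : Type*) := ι → Option Bool

/-- An assignment `c` satisfies a conjunction of literals `B`. -/
def Satisfies {ι : Type*} (c : Assign ι) (B : Conj ι) : Prop :=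
  ∀ i v, B i = some v → c i = v

/-- `B'` extends `B` : the domain of `B'` contains that of `B` and they agree there. -/
def ConjExtends {ι : Type*} (B B' : Conj ι) : Prop :=
  ∀ i v, B i = some v → B' i = some v

/-- `(A, 𝔅)` is a sufficient cause representation for the family of potential
outcomes `D`. -/
def IsRepresentation {ι Ω : Type*} (D : Ω → Assign ι → Bool)
    {p : ℕ} (A : Fin p → Ω → Bool) (𝔅 : Fin p → Conj ι) : Prop :=
  ∀ (ω : Ω) (c : Assign ι),
    D ω c = true ↔ ∃ j, A j ω = true ∧ Satisfies c (𝔅 j)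

/-- `B` is irreducible for `D(C, Ω)`: every sufficient cause representation
contains some conjunction extending `B`. -/
def IrreducibleConj {ι Ω : Type*} (D : Ω → Assign ι → Bool) (B : Conj ι) : Prop :=
  ∀ (p : ℕ) (A : Fin p → Ω → Bool) (𝔅 : Fin p → Conj ι),
    IsRepresentation D A 𝔅 → ∃ j, ConjExtends B (𝔅 j)

/-- `B` is a sufficient cause for `D` for the individual `ω`. -/
def SuffCauseFor {ι Ω : Type*} (D : Ω → Assign ι → Bool) (B : Conj ι) (ω : Ω) : Prop :=
  ∀ c : Assign ι, Satisfies c B → D ω c = true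

/-- `B` is a minimal sufficient cause for `D` for `ω`: it is a sufficient cause,
but no restriction of `B` to a proper subset of its domain is. -/
def MinSuffCauseFor {ι Ω : Type*} (D : Ω → Assign ι → Bool) (B : Conj ι) (ω : Ω) : Prop :=
  SuffCauseFor D B ω ∧
    ∀ B' : Conj ι, ConjExtends B' B → B' ≠ B → ¬ SuffCauseFor D B' ω

/-- `B` is a singular (minimal sufficient) cause for `ω`: it is the unique minimal
sufficient cause for `ω`. -/
def SingularFor {ι Ω : Type*} (D : Ω → Assign ι → Bool) (B : Conj ι) (ω : Ω) : Prop :=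
  MinSuffCauseFor D B ω ∧ ∀ B' : Conj ι, B' ≠ B → ¬ MinSuffCauseFor D B' ω

/-- `B` is singular for `D(C, Ω)`: it is singular for some individual. -/
def Singular {ι Ω : Type*} (D : Ω → Assign ι → Bool) (B : Conj ι) : Prop :=
  ∃ ω : Ω, SingularFor D B ω

/-- The literal at coordinate `i` with target value `v` has a positive monotonic
effect on `D` relative to `C`. -/
def PosMonotone {ι Ω : Type*} [DecidableEq ι] (D : Ω → Assign ι → Bool)
    (i : ι) (v : Bool) : Prop :=
  ∀ (ω : Ω) (c : Assign ι),
    D ω (Function.update c i (!v)) = true → D ω (Function.update c i v) = true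

/-- `T` is a tree on the finite vertex set `V`: a set of unordered pairs of
distinct elements of `V` with `|T| = |V| - 1` such that any two vertices of `V`
are connected by a path of edges of `T`. -/
def IsTreeOn {ι : Type*} (V : Finset ι) (T : Finset (Sym2 ι)) : Prop :=
  (∀ e ∈ T, ¬ e.IsDiag ∧ ∀ i ∈ e, i ∈ V) ∧
  T.card = V.card - 1 ∧
  (∀ x ∈ V, ∀ y ∈ V, Relation.ReflTransGen (fun a b => s(a, b) ∈ T) x y)


/-!
For the full conjunction `b`, both minimality for an individual `ω` and irreducibility come
down to `b` being an isolated true point of `D ω`: `D ω b = 1` while every one-coordinate flip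
of `b` gives `0`. The flips witness that no literal of `b` can be dropped, and if no `ω` had `b`
as an isolated true point, conjunctions with one literal of `b` dropped would replace `b` in a
representation. When all literals but the `j`-th have positive monotonic effects, an isolated
true point `b` is the only true point of `D ω`, so every sufficient cause for `ω` extends `b`,
which makes `b` singular.
-/

open Function Finset

section
variable {ι Ω : Type*} {D : Ω → Assign ι → Bool} {ω : Ω} {b c : Assign ι}

theorem satisfies_iff_conjExtends {B : Conj ι} :
    Satisfies c B ↔ ConjExtends B (fun i => some (c i)) := by
  simp only [Satisfies, ConjExtends, Option.some_inj]

theorem satisfies_some_iff : Satisfies c (fun i => some (b i)) ↔ c = b := by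
  simp only [Satisfies, Option.some_inj, funext_iff]
  exact ⟨fun h i => h i _ rfl, fun h i v hv => hv ▸ h i⟩

theorem IrreducibleConj.exists_conjExtends_of_fintype {B : Conj ι} (h : IrreducibleConj D B)
    {J : Type*} [Fintype J] (A : J → Ω → Bool) (𝔅 : J → Conj ι)
    (hrep : ∀ ω c, D ω c = true ↔ ∃ j, A j ω = true ∧ Satisfies c (𝔅 j)) :
    ∃ j, ConjExtends B (𝔅 j) := by
  let e := (Fintype.equivFin J).symm
  obtain ⟨n, hn⟩ := h _ (fun n => A (e n)) (fun n => 𝔅 (e n))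
    fun ω c => (hrep ω c).trans e.symm.exists_congr_left
  exact ⟨e n, hn⟩

variable [DecidableEq ι]

theorem Satisfies.update_of_eq_none {B : Conj ι} {i : ι} (hc : Satisfies c B)
    (hi : B i = none) (v : Bool) : Satisfies (update c i v) B := by
  intro k w hk
  have hki : k ≠ i := by rintro rfl; simp [hi] at hk
  rw [update_of_ne hki, hc k w hk]

theorem satisfies_update_none_iff {i : ι} :
    Satisfies c (update (fun k => some (b k)) i none) ↔ c = b ∨ c = update b i (!b i) := by
  have hagree : Satisfies c (update (fun k => some (b k)) i none) ↔ ∀ k ≠ i, c k = b k := by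
    refine ⟨fun h k hk => h k _ (by simp [hk]), fun h k v hk => ?_⟩
    have hki : k ≠ i := by rintro rfl; simp at hk
    simpa [hki, h k hki] using hk
  rw [hagree]
  constructor
  · intro h
    have hc : c = update b i (c i) := eq_update_iff.mpr ⟨rfl, h⟩
    rcases Bool.eq_or_eq_not (c i) (b i) with hi | hi <;> rw [hi] at hc
    · exact .inl (hc.trans (update_eq_self i b))
    · exact .inr hc
  · rintro (rfl | rfl) k hk
    exacts [rfl, update_of_ne hk _ _]

def IsIsolatedTrue (D : Ω → Assign ι → Bool) (ω : Ω) (b : Assign ι) : Prop :=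
  D ω b = true ∧ ∀ i, D ω (update b i (!b i)) = false

theorem minSuffCauseFor_iff_isIsolatedTrue :
    MinSuffCauseFor D (fun i => some (b i)) ω ↔ IsIsolatedTrue D ω b := by
  constructor
  · rintro ⟨hsuff, hmin⟩
    have hb : D ω b = true := hsuff b (satisfies_some_iff.mpr rfl)
    refine ⟨hb, fun i => ?_⟩
    have hext : ConjExtends (update (fun k => some (b k)) i none) (fun k => some (b k)) := by
      intro k v hk
      by_cases hki : k = i
      · simp [hki] at hk
      · simpa [hki] using hk
    have hne : update (fun k => some (b k)) i none ≠ fun k => some (b k) :=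
      fun h => by simpa using congrFun h i
    obtain ⟨c, hc, hDc⟩ : ∃ c, _ ∧ D ω c ≠ true := by
      simpa [SuffCauseFor] using hmin _ hext hne
    rcases satisfies_update_none_iff.mp hc with rfl | rfl
    · exact absurd hb hDc
    · simpa using hDc
  · rintro ⟨hb, hflip⟩
    refine ⟨fun c hc => satisfies_some_iff.mp hc ▸ hb, fun B' hext hne hsuff => ?_⟩
    have hbB' : Satisfies b B' := satisfies_iff_conjExtends.mpr hext
    obtain ⟨i, hi⟩ : ∃ i, B' i = none := by
      by_contra! h
      refine hne (funext fun k => ?_)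
      obtain ⟨v, hv⟩ := Option.ne_none_iff_exists'.mp (h k)
      rw [hv, hbB' k v hv]
    simpa [hflip i] using hsuff _ (hbB'.update_of_eq_none hi (!b i))

theorem IsIsolatedTrue.irreducibleConj (hb : IsIsolatedTrue D ω b) :
    IrreducibleConj D (fun i => some (b i)) := by
  intro p A 𝔅 hrep
  obtain ⟨j, hA, hsat⟩ := (hrep ω b).mp hb.1
  refine ⟨j, fun i v hv => ?_⟩
  cases Option.some_inj.mp hv
  rcases hBi : 𝔅 j i with _ | w
  · have hflip := (hrep ω _).mpr ⟨j, hA, hsat.update_of_eq_none hBi (!b i)⟩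
    simp [hb.2 i] at hflip
  · rw [hsat i w hBi]

/-- Otherwise the full conjunctions of the points `c ≠ b`, together with the conjunctions `b`
minus one literal `i` (active where `b` and its `i`-th flip are both true points), form a
representation in which no conjunction extends `b`. -/
theorem IrreducibleConj.exists_isIsolatedTrue [Fintype ι]
    (h : IrreducibleConj D (fun i => some (b i))) : ∃ ω, IsIsolatedTrue D ω b := by
  by_contra! hnone
  let A : {c : Assign ι // c ≠ b} ⊕ ι → Ω → Bool
    | .inl c, ω => D ω c
    | .inr i, ω => D ω b && D ω (update b i (!b i))
  let 𝔅 : {c : Assign ι // c ≠ b} ⊕ ι → Conj ι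
    | .inl c => fun k => some (c.1 k)
    | .inr i => update (fun k => some (b k)) i none
  obtain ⟨c | i, hc⟩ := h.exists_conjExtends_of_fintype A 𝔅 fun ω c => by
    constructor
    · intro hc
      by_cases hcb : c = b
      · subst hcb
        obtain ⟨i, hi⟩ : ∃ i, D ω (update c i (!c i)) = true := by
          simpa [IsIsolatedTrue, hc] using hnone ω
        exact ⟨.inr i, by simp [A, hc, hi], satisfies_update_none_iff.mpr (.inl rfl)⟩
      · exact ⟨.inl ⟨c, hcb⟩, hc, satisfies_some_iff.mpr rfl⟩
    · rintro ⟨j | i, hA, hsat⟩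
      · rwa [satisfies_some_iff.mp hsat]
      · simp only [A, Bool.and_eq_true] at hA
        rcases satisfies_update_none_iff.mp hsat with rfl | rfl
        exacts [hA.1, hA.2]
  · exact c.2 (satisfies_some_iff.mp (satisfies_iff_conjExtends.mpr hc))
  · simpa [𝔅] using hc i (b i) rfl

theorem PosMonotone.update_eq_true {i : ι} {v : Bool} (hmono : PosMonotone D i v)
    (hc : D ω c = true) : D ω (update c i v) = true := by
  rcases Bool.eq_or_eq_not (c i) v with hi | hi
  · rwa [← hi, update_eq_self]
  · exact hmono ω c (by rwa [← hi, update_eq_self])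

theorem piecewise_eq_true_of_posMonotone {j : ι} (hmono : ∀ i ≠ j, PosMonotone D i (b i))
    {s : Finset ι} (hjs : j ∉ s) (hc : D ω c = true) :
    D ω (s.piecewise b c) = true := by
  induction s using Finset.induction_on with
  | empty => simpa using hc
  | insert i s his ih =>
    rw [piecewise_insert]
    exact (hmono i (by rintro rfl; simp at hjs)).update_eq_true (ih (by simp_all))

/-- From a true point `c ≠ b`, monotonicity lets us move every coordinate where `c` and `b`
differ, except one (chosen to be `j` if `j` is among them), to its value in `b`; this lands on
a neighbour of `b`. -/
theorem IsIsolatedTrue.eq_of_posMonotone [Fintype ι] (hb : IsIsolatedTrue D ω b) {j : ι}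
    (hmono : ∀ i ≠ j, PosMonotone D i (b i)) (hc : D ω c = true) : c = b := by
  by_contra hcb
  obtain ⟨i, hci, hj⟩ : ∃ i, c i ≠ b i ∧ (j ≠ i → c j = b j) := by
    by_cases hj : c j = b j
    · obtain ⟨i, hi⟩ := ne_iff.mp hcb
      exact ⟨i, hi, fun _ => hj⟩
    · exact ⟨j, hj, fun h => absurd rfl h⟩
  let s := univ.filter fun k => k ≠ i ∧ c k ≠ b k
  have hjs : j ∉ s := by
    simp only [s, mem_filter, mem_univ, true_and, not_and, not_not]
    exact hj
  have hflip : s.piecewise b c = update b i (!b i) := by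
    funext k
    by_cases hki : k = i
    · subst hki
      simpa [s] using Bool.eq_not_of_ne hci
    · by_cases hk : c k = b k <;> simp [s, hki, hk, piecewise]
  have := piecewise_eq_true_of_posMonotone hmono hjs hc
  simp [hflip, hb.2 i] at this

theorem IsIsolatedTrue.singularFor_of_posMonotone [Fintype ι] (hb : IsIsolatedTrue D ω b)
    {j : ι} (hmono : ∀ i ≠ j, PosMonotone D i (b i)) :
    SingularFor D (fun i => some (b i)) ω := by
  have hmin := minSuffCauseFor_iff_isIsolatedTrue.mpr hb
  refine ⟨hmin, fun B' hne hB' => hmin.2 B' ?_ hne hB'.1⟩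
  let c : Assign ι := fun k => (B' k).getD (b k)
  have hc : Satisfies c B' := fun k v hk => by simp [c, hk]
  rw [← satisfies_iff_conjExtends, ← hb.eq_of_posMonotone hmono (hB'.1 c hc)]
  exact hc

end

theorem singular_iff_irreducible_of_monotone_general {ι Ω : Type*} [Fintype ι] [DecidableEq ι]
    (D : Ω → Assign ι → Bool) (b : ι → Bool)
    (hmono : ∃ j : ι, ∀ i : ι, i ≠ j → PosMonotone D i (b i)) :
    Singular D (fun i => some (b i)) ↔ IrreducibleConj D (fun i => some (b i)) := by
  obtain ⟨j, hmono⟩ := hmono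
  constructor
  · rintro ⟨ω, hmin, -⟩
    exact (minSuffCauseFor_iff_isIsolatedTrue.mp hmin).irreducibleConj
  · intro hirr
    obtain ⟨ω, hb⟩ := hirr.exists_isIsolatedTrue
    exact ⟨ω, hb.singularFor_of_posMonotone hmono⟩

/-- Corollary 5.4: if all, or all but one, of the literals of a
full-domain conjunction have positive monotonic effects, then singularity and
irreducibility coincide. -/
theorem singular_iff_irreducible_of_monotone {ι Ω : Type*} [Fintype ι] [DecidableEq ι]
    [Nonempty ι] [Nonempty Ω]
    (D : Ω → Assign ι → Bool) (b : ι → Bool)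
    (hmono : ∃ j : ι, ∀ i : ι, i ≠ j → PosMonotone D i (b i)) :
    Singular D (fun i => some (b i)) ↔ IrreducibleConj D (fun i => some (b i)) :=
  singular_iff_irreducible_of_monotone_general D b hmono
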